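/- (Conservativity over proof labels) Let θ1, θ2 be proof labels without keys and let m, n be keys with m ≠ n. Then θ1 ⌣BC θ2 (Boudol–Castellani concurrency) if and only if θ1[m] ι θ2[n]. -/
import Mathlib


namespace CCSKP

/-- Action labels: names, co-names and τ. -/
inductive Act : Type where
  | name (a : ℕ)
  | coname (a : ℕ)
  | tau
deriving DecidableEq

/-- Complement of an action label. -/
def Act.bar : Act → Act
  | .name a => .coname a
  | .coname a => .name a
  | .tau => .tau

/-- Directions Left / Right. -/
inductive Dir : Type where
  | L
  | R
deriving DecidableEq

/-- The opposite direction. -/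
def Dir.op : Dir → Dir
  | .L => .R
  | .R => .L

/-- Selection according to a direction. -/
def Dir.sel {α : Type*} : Dir → α → α → α
  | .L, x, _ => x
  | .R, _, y => y

/-- Keys. -/
abbrev Key := ℕ

/-- CCSK processes. -/
inductive Proc : Type where
  | nil
  | pre (α : Act) (X : Proc)
  | res (X : Proc) (a : ℕ)
  | sum (X Y : Proc)
  | par (X Y : Proc)
  | keyed (α : Act) (k : Key) (X : Proc)
deriving DecidableEq

/-- The set of keys occurring in a process. -/
def Proc.keys : Proc → Finset Key
  | .nil => ∅
  | .pre _ X => X.keys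
  | .res X _ => X.keys
  | .sum X Y => X.keys ∪ Y.keys
  | .par X Y => X.keys ∪ Y.keys
  | .keyed _ k X => insert k X.keys

/-- Standard processes: no keys. -/
def Proc.Std (X : Proc) : Prop := X.keys = ∅

/-- Proof keyed labels. -/
inductive PLab : Type where
  | act (α : Act) (k : Key)
  | par (d : Dir) (θ : PLab)
  | sum (d : Dir) (θ : PLab)
  | syn (θL θR : PLab)
deriving DecidableEq

/-- The action ℓ(θ) of a proof keyed label. -/
def PLab.lab : PLab → Act
  | .act α _ => α
  | .par _ θ => θ.lab
  | .sum _ θ => θ.lab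
  | .syn _ _ => .tau

/-- The key of a proof keyed label. -/
def PLab.key : PLab → Key
  | .act _ k => k
  | .par _ θ => θ.key
  | .sum _ θ => θ.key
  | .syn θL _ => θL.key

/-- θ is of the form υ α[k] (no synchronisation pair). -/
def PLab.IsPre : PLab → Prop
  | .act _ _ => True
  | .par _ θ => θ.IsPre
  | .sum _ θ => θ.IsPre
  | .syn _ _ => False

/-- Forward transitions of CCSKP. -/
inductive Fwd : Proc → PLab → Proc → Prop where
  | act {α : Act} {X : Proc} {k : Key} :
      X.keys = ∅ → Fwd (.pre α X) (.act α k) (.keyed α k X)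
  | pre {X X' : Proc} {θ : PLab} {α : Act} {k : Key} :
      Fwd X θ X' → θ.key ≠ k → Fwd (.keyed α k X) θ (.keyed α k X')
  | res {X X' : Proc} {θ : PLab} {a : ℕ} :
      Fwd X θ X' → θ.lab ≠ .name a → θ.lab ≠ .coname a →
      Fwd (.res X a) θ (.res X' a)
  | parL {X X' Y : Proc} {θ : PLab} :
      Fwd X θ X' → θ.key ∉ Y.keys → Fwd (.par X Y) (.par .L θ) (.par X' Y)
  | parR {X Y Y' : Proc} {θ : PLab} :
      Fwd Y θ Y' → θ.key ∉ X.keys → Fwd (.par X Y) (.par .R θ) (.par X Y')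
  | syn {X X' Y Y' : Proc} {θ1 θ2 : PLab} :
      Fwd X θ1 X' → Fwd Y θ2 Y' → θ1.IsPre → θ2.IsPre → θ1.lab ≠ .tau →
      θ2.lab = θ1.lab.bar → θ2.key = θ1.key →
      Fwd (.par X Y) (.syn θ1 θ2) (.par X' Y')
  | sumL {X X' Y : Proc} {θ : PLab} :
      Fwd X θ X' → Y.keys = ∅ → Fwd (.sum X Y) (.sum .L θ) (.sum X' Y)
  | sumR {X Y Y' : Proc} {θ : PLab} :
      Fwd Y θ Y' → X.keys = ∅ → Fwd (.sum X Y) (.sum .R θ) (.sum X Y')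

/-- Backward transitions of CCSKP: the exactly symmetric rules. -/
inductive Bwd : Proc → PLab → Proc → Prop where
  | act {α : Act} {X : Proc} {k : Key} :
      X.keys = ∅ → Bwd (.keyed α k X) (.act α k) (.pre α X)
  | pre {X' X : Proc} {θ : PLab} {α : Act} {k : Key} :
      Bwd X' θ X → θ.key ≠ k → Bwd (.keyed α k X') θ (.keyed α k X)
  | res {X' X : Proc} {θ : PLab} {a : ℕ} :
      Bwd X' θ X → θ.lab ≠ .name a → θ.lab ≠ .coname a →
      Bwd (.res X' a) θ (.res X a)
  | parL {X' X Y : Proc} {θ : PLab} :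
      Bwd X' θ X → θ.key ∉ Y.keys → Bwd (.par X' Y) (.par .L θ) (.par X Y)
  | parR {X Y' Y : Proc} {θ : PLab} :
      Bwd Y' θ Y → θ.key ∉ X.keys → Bwd (.par X Y') (.par .R θ) (.par X Y)
  | syn {X' X Y' Y : Proc} {θ1 θ2 : PLab} :
      Bwd X' θ1 X → Bwd Y' θ2 Y → θ1.IsPre → θ2.IsPre → θ1.lab ≠ .tau →
      θ2.lab = θ1.lab.bar → θ2.key = θ1.key →
      Bwd (.par X' Y') (.syn θ1 θ2) (.par X Y)
  | sumL {X' X Y : Proc} {θ : PLab} :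
      Bwd X' θ X → Y.keys = ∅ → Bwd (.sum X' Y) (.sum .L θ) (.sum X Y)
  | sumR {X Y' Y : Proc} {θ : PLab} :
      Bwd Y' θ Y → X.keys = ∅ → Bwd (.sum X Y') (.sum .R θ) (.sum X Y)

/-- A combined step: forward if `d = true`, backward if `d = false`. -/
def Step (X : Proc) (d : Bool) (θ : PLab) (Y : Proc) : Prop :=
  if d then Fwd X θ Y else Bwd X θ Y

/-- Transitions of CCSKP (forward or backward). -/
structure Tr : Type where
  src : Proc
  fwd? : Bool
  lbl : PLab
  tgt : Proc
deriving DecidableEq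

/-- A transition is valid if it is derivable in the LTS. -/
def Tr.Valid (t : Tr) : Prop := Step t.src t.fwd? t.lbl t.tgt

/-- The reverse of a transition. -/
def Tr.rev (t : Tr) : Tr := ⟨t.tgt, !t.fwd?, t.lbl, t.src⟩

/-- The key of a transition. -/
def Tr.key (t : Tr) : Key := t.lbl.key

/-- Existence of a path between two processes. -/
inductive Reach : Proc → Proc → Prop where
  | refl (X : Proc) : Reach X X
  | step {X Y Z : Proc} {d : Bool} {θ : PLab} :
      Step X d θ Y → Reach Y Z → Reach X Z

/-- t is connected to u: there is a path from the source of t to the target of u. -/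
def Tr.ConnectedTo (t u : Tr) : Prop := Reach t.src u.tgt

/-- t and u are connected. -/
def Tr.Connected (t u : Tr) : Prop := t.ConnectedTo u ∨ u.ConnectedTo t

/-- X cannot perform a backward transition. -/
def Rooted (X : Proc) : Prop := ∀ (θ : PLab) (Y : Proc), ¬ Bwd X θ Y

/-- Reachable processes: target of a rooted path from a standard origin. -/
def Reachable (X : Proc) : Prop := ∃ O : Proc, O.Std ∧ Rooted O ∧ Reach O X

/-- The connectivity relation ⌢ on proof keyed labels. -/
inductive Conn : PLab → PLab → Prop where
  | a1 {α : Act} {k : Key} {θ : PLab} : Conn (.act α k) θ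
  | a2 {θ : PLab} {α : Act} {k : Key} :
      (∀ (β : Act) (k' : Key), θ ≠ .act β k') → Conn θ (.act α k)
  | c1 {d : Dir} {θ θ' : PLab} : Conn θ θ' → Conn (.sum d θ) (.sum d θ')
  | c2 {d : Dir} {θ θ' : PLab} : Conn (.sum d θ) (.sum d.op θ')
  | p1 {d : Dir} {θ θ' : PLab} : Conn θ θ' → Conn (.par d θ) (.par d θ')
  | p2 {d : Dir} {θ θ' : PLab} : Conn (.par d θ) (.par d.op θ')
  | s1 {d : Dir} {θ θL θR : PLab} : Conn θ (d.sel θL θR) → Conn (.par d θ) (.syn θL θR)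
  | s2 {d : Dir} {θ θL θR : PLab} : Conn (d.sel θL θR) θ → Conn (.syn θL θR) (.par d θ)
  | s3 {θ1 θ2 θ1' θ2' : PLab} : Conn θ1 θ1' → Conn θ2 θ2' → Conn (.syn θ1 θ2) (.syn θ1' θ2')

/-- The dependence relation ⊙ on proof keyed labels. -/
inductive Dep : PLab → PLab → Prop where
  | a1 {α : Act} {k : Key} {θ : PLab} : Dep (.act α k) θ
  | a2 {θ : PLab} {α : Act} {k : Key} :
      (∀ (β : Act) (k' : Key), θ ≠ .act β k') → Dep θ (.act α k)
  | c1 {d : Dir} {θ θ' : PLab} : Dep θ θ' → Dep (.sum d θ) (.sum d θ')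
  | c2 {d : Dir} {θ θ' : PLab} : Dep (.sum d θ) (.sum d.op θ')
  | p1 {d : Dir} {θ θ' : PLab} : Dep θ θ' → Dep (.par d θ) (.par d θ')
  | p2k {d : Dir} {θ θ' : PLab} : θ.key = θ'.key → Dep (.par d θ) (.par d.op θ')
  | s1 {d : Dir} {θ θL θR : PLab} : Dep θ (d.sel θL θR) → Dep (.par d θ) (.syn θL θR)
  | s2 {d : Dir} {θ θL θR : PLab} : Dep (d.sel θL θR) θ → Dep (.syn θL θR) (.par d θ)
  | s3a {θ1 θ2 θ1' θ2' : PLab} : Dep θ1 θ1' → Conn θ2 θ2' → Dep (.syn θ1 θ2) (.syn θ1' θ2')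
  | s3b {θ1 θ2 θ1' θ2' : PLab} : Conn θ1 θ1' → Dep θ2 θ2' → Dep (.syn θ1 θ2) (.syn θ1' θ2')

/-- The independence relation ι on proof keyed labels. -/
inductive Ind : PLab → PLab → Prop where
  | c1 {d : Dir} {θ θ' : PLab} : Ind θ θ' → Ind (.sum d θ) (.sum d θ')
  | p1 {d : Dir} {θ θ' : PLab} : Ind θ θ' → Ind (.par d θ) (.par d θ')
  | p2k {d : Dir} {θ θ' : PLab} : θ.key ≠ θ'.key → Ind (.par d θ) (.par d.op θ')
  | s1 {d : Dir} {θ θL θR : PLab} : Ind θ (d.sel θL θR) → Ind (.par d θ) (.syn θL θR)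
  | s2 {d : Dir} {θ θL θR : PLab} : Ind (d.sel θL θR) θ → Ind (.syn θL θR) (.par d θ)
  | s3 {θ1 θ2 θ1' θ2' : PLab} : Ind θ1 θ1' → Ind θ2 θ2' → Ind (.syn θ1 θ2) (.syn θ1' θ2')

/-- Independence of transitions: connected transitions with independent labels. -/
def Tr.ind (t u : Tr) : Prop := t.Valid ∧ u.Valid ∧ t.Connected u ∧ Ind t.lbl u.lbl

/-- Dependence of transitions: connected transitions with dependent labels. -/
def Tr.dep (t u : Tr) : Prop := t.Valid ∧ u.Valid ∧ t.Connected u ∧ Dep t.lbl u.lbl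

end CCSKP

namespace CCSKP

/-- Proof labels without keys. -/
inductive BLab : Type where
  | act (α : Act)
  | par (d : Dir) (θ : BLab)
  | sum (d : Dir) (θ : BLab)
  | syn (θL θR : BLab)
deriving DecidableEq

/-- Attach a key to the action(s) of a proof label. -/
def BLab.withKey : BLab → Key → PLab
  | .act α, k => .act α k
  | .par d θ, k => .par d (θ.withKey k)
  | .sum d θ, k => .sum d (θ.withKey k)
  | .syn θL θR, k => .syn (θL.withKey k) (θR.withKey k)

/-- Boudol–Castellani concurrency: the least symmetric relation closed under A1–A4. -/
inductive BCconc : BLab → BLab → Prop where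
  | symm {θ θ' : BLab} : BCconc θ θ' → BCconc θ' θ
  | a1 {θ θ' : BLab} : BCconc (.par .L θ) (.par .R θ')
  | a2L {θ θ' θ'' : BLab} : BCconc θ θ' → BCconc (.par .L θ) (.syn θ' θ'')
  | a2R {θ θ' θ'' : BLab} : BCconc θ θ' → BCconc (.par .R θ) (.syn θ'' θ')
  | a3p {d : Dir} {θ θ' : BLab} : BCconc θ θ' → BCconc (.par d θ) (.par d θ')
  | a3s {d : Dir} {θ θ' : BLab} : BCconc θ θ' → BCconc (.sum d θ) (.sum d θ')
  | a4 {θL θR θL' θR' : BLab} :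
      BCconc θL θL' → BCconc θR θR' → BCconc (.syn θL θR) (.syn θL' θR')

end CCSKP

namespace CCSKP

lemma withKey_key (θ : BLab) (k : Key) : (θ.withKey k).key = k := by
  induction θ with
  | act α => rfl
  | par d θ ih => exact ih
  | sum d θ ih => exact ih
  | syn θL θR ihL ihR => exact ihL

lemma ind_swap {x y : PLab} (h : Ind x y) : Ind y x := by
  induction h with
  | c1 _ ih => exact Ind.c1 ih
  | p1 _ ih => exact Ind.p1 ih
  | @p2k d a b h =>
    cases d
    · exact Ind.p2k (d := .R) (Ne.symm h)
    · exact Ind.p2k (d := .L) (Ne.symm h)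
  | s1 _ ih => exact Ind.s2 ih
  | s2 _ ih => exact Ind.s1 ih
  | s3 _ _ ih1 ih2 => exact Ind.s3 ih1 ih2

lemma withKey_sel (d : Dir) (l r : BLab) (k : Key) :
    (d.sel l r).withKey k = d.sel (l.withKey k) (r.withKey k) := by
  cases d <;> rfl

lemma bc_par_ne (d : Dir) (a b : BLab) : BCconc (.par d a) (.par d.op b) := by
  cases d
  · exact BCconc.a1
  · exact BCconc.symm BCconc.a1

lemma withKey_eq_par {θ : BLab} {k : Key} {d : Dir} {p : PLab}
    (h : θ.withKey k = .par d p) : ∃ t, θ = .par d t ∧ t.withKey k = p := by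
  cases θ <;> simp_all [BLab.withKey]

lemma withKey_eq_sum {θ : BLab} {k : Key} {d : Dir} {p : PLab}
    (h : θ.withKey k = .sum d p) : ∃ t, θ = .sum d t ∧ t.withKey k = p := by
  cases θ <;> simp_all [BLab.withKey]

lemma withKey_eq_syn {θ : BLab} {k : Key} {p q : PLab}
    (h : θ.withKey k = .syn p q) :
    ∃ l r, θ = .syn l r ∧ l.withKey k = p ∧ r.withKey k = q := by
  cases θ <;> simp_all [BLab.withKey]

lemma ind_to_bc {x y : PLab} (h : Ind x y) {m n : Key} :
    ∀ θ1 θ2 : BLab, x = θ1.withKey m → y = θ2.withKey n → BCconc θ1 θ2 := by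
  induction h with
  | @c1 d a b _ ih =>
    intro θ1 θ2 h1 h2
    obtain ⟨t1, rfl, rfl⟩ := withKey_eq_sum h1.symm
    obtain ⟨t2, rfl, rfl⟩ := withKey_eq_sum h2.symm
    exact BCconc.a3s (ih _ _ rfl rfl)
  | @p1 d a b _ ih =>
    intro θ1 θ2 h1 h2
    obtain ⟨t1, rfl, rfl⟩ := withKey_eq_par h1.symm
    obtain ⟨t2, rfl, rfl⟩ := withKey_eq_par h2.symm
    exact BCconc.a3p (ih _ _ rfl rfl)
  | @p2k d a b _ =>
    intro θ1 θ2 h1 h2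
    obtain ⟨t1, rfl, rfl⟩ := withKey_eq_par h1.symm
    obtain ⟨t2, rfl, rfl⟩ := withKey_eq_par h2.symm
    exact bc_par_ne d t1 t2
  | @s1 d a l r _ ih =>
    intro θ1 θ2 h1 h2
    obtain ⟨t1, rfl, rfl⟩ := withKey_eq_par h1.symm
    obtain ⟨t2, t3, rfl, rfl, rfl⟩ := withKey_eq_syn h2.symm
    have := ih t1 (d.sel t2 t3) rfl (by rw [withKey_sel])
    cases d
    · exact BCconc.a2L this
    · exact BCconc.a2R this
  | @s2 d a l r _ ih =>
    intro θ1 θ2 h1 h2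
    obtain ⟨t2, t3, rfl, rfl, rfl⟩ := withKey_eq_syn h1.symm
    obtain ⟨t1, rfl, rfl⟩ := withKey_eq_par h2.symm
    have := ih (d.sel t2 t3) t1 (by rw [withKey_sel]) rfl
    cases d
    · exact BCconc.symm (BCconc.a2L (BCconc.symm this))
    · exact BCconc.symm (BCconc.a2R (BCconc.symm this))
  | @s3 a b c e _ _ ih1 ih2 =>
    intro θ1 θ2 h1 h2
    obtain ⟨t1, t2, rfl, rfl, rfl⟩ := withKey_eq_syn h1.symm
    obtain ⟨t3, t4, rfl, rfl, rfl⟩ := withKey_eq_syn h2.symm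
    exact BCconc.a4 (ih1 _ _ rfl rfl) (ih2 _ _ rfl rfl)

/-- **Conservativity over proof labels.** For keyless proof labels θ1, θ2 and distinct
keys m ≠ n, Boudol–Castellani concurrency θ1 ⌣BC θ2 holds iff θ1[m] ι θ2[n]. -/
theorem conservativity_over_proof_labels (θ1 θ2 : BLab) (m n : Key) (hmn : m ≠ n) :
    BCconc θ1 θ2 ↔ Ind (θ1.withKey m) (θ2.withKey n) := by
  constructor
  · intro h
    induction h generalizing m n with
    | symm _ ih => exact ind_swap (ih n m hmn.symm)
    | a1 => exact Ind.p2k (d := .L) (by simpa [withKey_key] using hmn)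
    | a2L _ ih => exact Ind.s1 (d := .L) (ih m n hmn)
    | a2R _ ih => exact Ind.s1 (d := .R) (ih m n hmn)
    | a3p _ ih => exact Ind.p1 (ih m n hmn)
    | a3s _ ih => exact Ind.c1 (ih m n hmn)
    | a4 _ _ ih1 ih2 => exact Ind.s3 (ih1 m n hmn) (ih2 m n hmn)
  · intro h
    exact ind_to_bc h θ1 θ2 rfl rfl

end CCSKP
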